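/- arXiv:2604.12355 — 5 statements merged into one kernel-verified Lean document; each statement's English description precedes it below -/
import Mathlib

section
/- Let A be an idempotent graded ring and M a unital torsion-free graded left A-module. Then the map χ_M : M → A·HOM_A(A,M), defined by χ_M(m)(a) = a·m, is an isomorphism of graded left A-modules (graded of degree e), where A·HOM_A(A,M) denotes the left A-submodule of HOM_A(A,M) generated by the action (a·f)(x) = f(xa). -/
/-!
Common infrastructure: non-unital (graded) rings, non-unital graded modules
(given by explicit action functions), graded homomorphisms of all degrees,
traces, torsion submodules, balanced tensor products, and graded Morita
contexts, following Dokuchaev–Simón, "Graded Equivalence for Graded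
Idempotent Rings".
-/

open DirectSum

section CommonDefs

variable {Γ : Type*} [Group Γ] {A B M N P Q : Type*}

/-- `M` is a left module over the non-unital ring `A` via the action `s`. -/
structure IsLMod (A M : Type*) [NonUnitalRing A] [AddCommGroup M] (s : A → M → M) : Prop where
  smul_add : ∀ (a : A) (m n : M), s a (m + n) = s a m + s a n
  add_smul : ∀ (a b : A) (m : M), s (a + b) m = s a m + s b m
  mul_smul : ∀ (a b : A) (m : M), s (a * b) m = s a (s b m)

/-- `M` is a right module over the non-unital ring `B` via the action `s`. -/
structure IsRMod (B M : Type*) [NonUnitalRing B] [AddCommGroup M] (s : M → B → M) : Prop where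
  add_smul : ∀ (m n : M) (b : B), s (m + n) b = s m b + s n b
  smul_add : ∀ (m : M) (a b : B), s m (a + b) = s m a + s m b
  smul_mul : ∀ (m : M) (a b : B), s m (a * b) = s (s m a) b

/-- The ring `A` is idempotent: `A² = A`. -/
def IsIdem (A : Type*) [NonUnitalRing A] : Prop :=
  ∀ a : A, a ∈ AddSubgroup.closure {x : A | ∃ y z : A, x = y * z}

/-- The left `A`-module with action `s` is unital: `AM = M`. -/
def IsUnitalL [NonUnitalRing A] [AddCommGroup M] (s : A → M → M) : Prop :=
  ∀ m : M, m ∈ AddSubgroup.closure {x : M | ∃ (a : A) (m' : M), x = s a m'}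

/-- The right `B`-module with action `s` is unital: `MB = M`. -/
def IsUnitalR [NonUnitalRing B] [AddCommGroup M] (s : M → B → M) : Prop :=
  ∀ m : M, m ∈ AddSubgroup.closure {x : M | ∃ (m' : M) (b : B), x = s m' b}

/-- The left `A`-module with action `s` is torsion-free: `Am = 0 → m = 0`. -/
def IsTorsionFreeL [NonUnitalRing A] [AddCommGroup M] (s : A → M → M) : Prop :=
  ∀ m : M, (∀ a : A, s a m = 0) → m = 0

/-- The right `B`-module with action `s` is torsion-free. -/
def IsTorsionFreeR [NonUnitalRing B] [AddCommGroup M] (s : M → B → M) : Prop :=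
  ∀ m : M, (∀ b : B, s m b = 0) → m = 0

/-- The family `𝒜` makes `A` a `Γ`-graded ring (multiplicativity of the grading;
the direct sum decomposition is recorded by a `DirectSum.Decomposition` instance). -/
def IsGRing [NonUnitalRing A] (𝒜 : Γ → AddSubgroup A) : Prop :=
  ∀ ⦃σ τ : Γ⦄ ⦃a b : A⦄, a ∈ 𝒜 σ → b ∈ 𝒜 τ → a * b ∈ 𝒜 (σ * τ)

/-- Grading compatibility for a left module: `A_σ · M_τ ⊆ M_{στ}`. -/
def IsGModL [NonUnitalRing A] [AddCommGroup M] (𝒜 : Γ → AddSubgroup A)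
    (ℳ : Γ → AddSubgroup M) (s : A → M → M) : Prop :=
  ∀ ⦃σ τ : Γ⦄ ⦃a : A⦄ ⦃m : M⦄, a ∈ 𝒜 σ → m ∈ ℳ τ → s a m ∈ ℳ (σ * τ)

/-- Grading compatibility for a right module: `M_τ · B_σ ⊆ M_{τσ}`. -/
def IsGModR [NonUnitalRing B] [AddCommGroup M] (ℬ : Γ → AddSubgroup B)
    (ℳ : Γ → AddSubgroup M) (s : M → B → M) : Prop :=
  ∀ ⦃σ τ : Γ⦄ ⦃m : M⦄ ⦃b : B⦄, m ∈ ℳ τ → b ∈ ℬ σ → s m b ∈ ℳ (τ * σ)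

/-- `f : M → N` is a homomorphism of left `A`-modules. -/
def IsLinL [NonUnitalRing A] [AddCommGroup M] [AddCommGroup N]
    (sM : A → M → M) (sN : A → N → N) (f : M →+ N) : Prop :=
  ∀ (a : A) (m : M), f (sM a m) = sN a (f m)

/-- `f : M → N` is a homomorphism of right `B`-modules. -/
def IsLinR [NonUnitalRing B] [AddCommGroup M] [AddCommGroup N]
    (sM : M → B → M) (sN : N → B → N) (f : M →+ N) : Prop :=
  ∀ (m : M) (b : B), f (sM m b) = sN (f m) b

/-- `f` is a graded homomorphism of degree `σ` (left module convention):
`f(M_τ) ⊆ N_{τσ}`. -/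
def IsDegL [AddCommGroup M] [AddCommGroup N] (ℳ : Γ → AddSubgroup M)
    (𝒩 : Γ → AddSubgroup N) (σ : Γ) (f : M →+ N) : Prop :=
  ∀ τ : Γ, ∀ m ∈ ℳ τ, f m ∈ 𝒩 (τ * σ)

/-- `f` is a graded homomorphism of degree `σ` (right module convention):
`f(M_τ) ⊆ N_{στ}`. -/
def IsDegR [AddCommGroup M] [AddCommGroup N] (ℳ : Γ → AddSubgroup M)
    (𝒩 : Γ → AddSubgroup N) (σ : Γ) (f : M →+ N) : Prop :=
  ∀ τ : Γ, ∀ m ∈ ℳ τ, f m ∈ 𝒩 (σ * τ)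

/-- `HOM_A(M,N)`: the additive group of graded left `A`-module homomorphisms
of all degrees (i.e. sums of homogeneous `A`-linear maps). -/
def HOML [NonUnitalRing A] [AddCommGroup M] [AddCommGroup N]
    (sM : A → M → M) (sN : A → N → N)
    (ℳ : Γ → AddSubgroup M) (𝒩 : Γ → AddSubgroup N) : AddSubgroup (M →+ N) :=
  AddSubgroup.closure {f | IsLinL sM sN f ∧ ∃ σ : Γ, IsDegL ℳ 𝒩 σ f}

/-- `HOM_B(M,N)` for right modules. -/
def HOMR [NonUnitalRing B] [AddCommGroup M] [AddCommGroup N]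
    (sM : M → B → M) (sN : N → B → N)
    (ℳ : Γ → AddSubgroup M) (𝒩 : Γ → AddSubgroup N) : AddSubgroup (M →+ N) :=
  AddSubgroup.closure {f | IsLinR sM sN f ∧ ∃ σ : Γ, IsDegR ℳ 𝒩 σ f}

/-- Given a subgroup `H` of homomorphisms `M →+ N` and a `C`-action on `M`
(`tw`), this is the subgroup `C·H` generated by the twisted maps
`c·f = f ∘ (tw c)`.  It models e.g. `B·HOM_A(P,N)` with `(b·f)(p) = f(pb)`. -/
def smulHOM [AddCommGroup M] [AddCommGroup N] (C : Type*)
    (H : AddSubgroup (M →+ N)) (tw : C → M → M) : AddSubgroup (M →+ N) :=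
  AddSubgroup.closure {g | ∃ (c : C) (f : M →+ N), f ∈ H ∧ ∀ m : M, g m = f (tw c m)}

/-- The graded trace `Tr_M(P)`: the additive subgroup of `M` generated by the
images of all graded homomorphisms `P → M` of arbitrary degree. -/
def TraceL [NonUnitalRing A] [AddCommGroup P] [AddCommGroup M]
    (sP : A → P → P) (sM : A → M → M)
    (𝓟 : Γ → AddSubgroup P) (ℳ : Γ → AddSubgroup M) : AddSubgroup M :=
  AddSubgroup.closure {x | ∃ f ∈ HOML sP sM 𝓟 ℳ, ∃ p : P, x = f p}

/-- The torsion part `t_A(M) = {m ∈ M | A·m = 0}`, as an additive subgroup. -/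
def torsionL [NonUnitalRing A] [AddCommGroup M] {s : A → M → M}
    (hM : IsLMod A M s) : AddSubgroup M where
  carrier := {m : M | ∀ a : A, s a m = 0}
  zero_mem' := by
    intro a
    have h := hM.smul_add a 0 0
    rw [add_zero] at h
    exact left_eq_add.mp h
  add_mem' := by
    intro m n hm hn a
    rw [hM.smul_add, hm a, hn a, add_zero]
  neg_mem' := by
    intro m hm a
    have h0 : s a (0 : M) = 0 := by
      have h := hM.smul_add a 0 0
      rw [add_zero] at h
      exact left_eq_add.mp h
    have h := hM.smul_add a m (-m)
    rw [add_neg_cancel, h0, hm a, zero_add] at h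
    exact h.symm

end CommonDefs

section Tensor

variable (B : Type*) {P Q : Type*} [AddCommGroup P] [AddCommGroup Q]

/-- Relations defining the balanced tensor product `P ⊗_B Q` of a right
`B`-module `P` (action `rs`) and a left `B`-module `Q` (action `ls`). -/
def TenRel (rs : P → B → P) (ls : B → Q → Q) : AddSubgroup (FreeAbelianGroup (P × Q)) :=
  AddSubgroup.closure
    ({x | ∃ (p p' : P) (q : Q), x = FreeAbelianGroup.of (p + p', q) -
        FreeAbelianGroup.of (p, q) - FreeAbelianGroup.of (p', q)} ∪
     {x | ∃ (p : P) (q q' : Q), x = FreeAbelianGroup.of (p, q + q') -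
        FreeAbelianGroup.of (p, q) - FreeAbelianGroup.of (p, q')} ∪
     {x | ∃ (p : P) (b : B) (q : Q), x = FreeAbelianGroup.of (rs p b, q) -
        FreeAbelianGroup.of (p, ls b q)})

/-- The balanced tensor product `P ⊗_B Q`. -/
abbrev Ten (rs : P → B → P) (ls : B → Q → Q) : Type _ :=
  FreeAbelianGroup (P × Q) ⧸ TenRel B rs ls

/-- The elementary tensor `p ⊗ q`. -/
def tmul {B : Type*} {rs : P → B → P} {ls : B → Q → Q} (p : P) (q : Q) :
    Ten B rs ls :=
  QuotientAddGroup.mk (FreeAbelianGroup.of (p, q))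

/-- The natural grading of the tensor product: the `ρ`-component is generated
by the `p ⊗ q` with `p, q` homogeneous of degrees multiplying to `ρ`. -/
def TenGr {Γ : Type*} [Group Γ] {B : Type*} {rs : P → B → P} {ls : B → Q → Q}
    (𝓟 : Γ → AddSubgroup P) (𝒬 : Γ → AddSubgroup Q) (ρ : Γ) :
    AddSubgroup (Ten B rs ls) :=
  AddSubgroup.closure
    {x | ∃ (σ τ : Γ) (p : P) (q : Q), p ∈ 𝓟 σ ∧ q ∈ 𝒬 τ ∧ σ * τ = ρ ∧ x = tmul p q}

end Tensor

section Morita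

/-- A graded Morita context `(A, B, P, Q, μ, ν)` between idempotent graded
rings, with the trace maps given by the balanced pairings
`pr = ⟨-,-⟩ : P × Q → A` and `br = [-,-] : Q × P → B`, both surjective. -/
structure GMoritaCtx (Γ : Type*) [Group Γ] (A B P Q : Type*)
    [NonUnitalRing A] [NonUnitalRing B] [AddCommGroup P] [AddCommGroup Q]
    (𝒜 : Γ → AddSubgroup A) (ℬ : Γ → AddSubgroup B)
    (𝓟 : Γ → AddSubgroup P) (𝒬 : Γ → AddSubgroup Q)
    (ap : A → P → P) (pb : P → B → P) (bq : B → Q → Q) (qa : Q → A → Q)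
    (pr : P → Q → A) (br : Q → P → B) : Prop where
  gradeA : IsGRing 𝒜
  gradeB : IsGRing ℬ
  idemA : IsIdem A
  idemB : IsIdem B
  lmodP : IsLMod A P ap
  rmodP : IsRMod B P pb
  bimodP : ∀ (a : A) (p : P) (b : B), pb (ap a p) b = ap a (pb p b)
  lmodQ : IsLMod B Q bq
  rmodQ : IsRMod A Q qa
  bimodQ : ∀ (b : B) (q : Q) (a : A), qa (bq b q) a = bq b (qa q a)
  unitalPl : IsUnitalL ap
  unitalPr : IsUnitalR pb
  unitalQl : IsUnitalL bq
  unitalQr : IsUnitalR qa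
  gradePl : IsGModL 𝒜 𝓟 ap
  gradePr : IsGModR ℬ 𝓟 pb
  gradeQl : IsGModL ℬ 𝒬 bq
  gradeQr : IsGModR 𝒜 𝒬 qa
  pr_addl : ∀ (p p' : P) (q : Q), pr (p + p') q = pr p q + pr p' q
  pr_addr : ∀ (p : P) (q q' : Q), pr p (q + q') = pr p q + pr p q'
  br_addl : ∀ (q q' : Q) (p : P), br (q + q') p = br q p + br q' p
  br_addr : ∀ (q : Q) (p p' : P), br q (p + p') = br q p + br q p'
  pr_bal : ∀ (p : P) (b : B) (q : Q), pr (pb p b) q = pr p (bq b q)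
  br_bal : ∀ (q : Q) (a : A) (p : P), br (qa q a) p = br q (ap a p)
  pr_linl : ∀ (a : A) (p : P) (q : Q), pr (ap a p) q = a * pr p q
  pr_linr : ∀ (p : P) (q : Q) (a : A), pr p (qa q a) = pr p q * a
  br_linl : ∀ (b : B) (q : Q) (p : P), br (bq b q) p = b * br q p
  br_linr : ∀ (q : Q) (p : P) (b : B), br q (pb p b) = br q p * b
  pr_graded : ∀ ⦃σ τ : Γ⦄ ⦃p : P⦄ ⦃q : Q⦄, p ∈ 𝓟 σ → q ∈ 𝒬 τ → pr p q ∈ 𝒜 (σ * τ)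
  br_graded : ∀ ⦃σ τ : Γ⦄ ⦃q : Q⦄ ⦃p : P⦄, q ∈ 𝒬 σ → p ∈ 𝓟 τ → br q p ∈ ℬ (σ * τ)
  assoc1 : ∀ (p' : P) (q : Q) (p : P), pb p' (br q p) = ap (pr p' q) p
  assoc2 : ∀ (q' : Q) (p : P) (q : Q), qa q' (pr p q) = bq (br q' p) q
  sur_pr : ∀ a : A, a ∈ AddSubgroup.closure {x : A | ∃ (p : P) (q : Q), x = pr p q}
  sur_br : ∀ b : B, b ∈ AddSubgroup.closure {x : B | ∃ (q : Q) (p : P), x = br q p}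

end Morita

/-- The map `χ_M(m) : A →+ M`, `a ↦ a·m`. -/
def chiMap {A M : Type*} [NonUnitalRing A] [AddCommGroup M] {s : A → M → M}
    (hM : IsLMod A M s) (m : M) : A →+ M :=
  AddMonoidHom.mk' (fun a => s a m) (fun a b => hM.add_smul a b m)

section Aux

variable {A M : Type*} [NonUnitalRing A] [AddCommGroup M] {s : A → M → M}

theorem IsLMod.smul_zero' (hM : IsLMod A M s) (a : A) : s a (0 : M) = 0 := by
  have h := hM.smul_add a 0 0
  rw [add_zero] at h
  exact left_eq_add.mp h

theorem IsLMod.smul_neg' (hM : IsLMod A M s) (a : A) (m : M) : s a (-m) = -(s a m) := by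
  have h := hM.smul_add a m (-m)
  rw [add_neg_cancel, hM.smul_zero'] at h
  exact eq_neg_of_add_eq_zero_right h.symm

@[simp] theorem chiMap_apply (hM : IsLMod A M s) (m : M) (a : A) :
    chiMap hM m a = s a m := rfl

theorem chiMap_zero (hM : IsLMod A M s) : chiMap hM (0 : M) = 0 := by
  ext a; simp [hM.smul_zero']

theorem chiMap_add (hM : IsLMod A M s) (m m' : M) :
    chiMap hM (m + m') = chiMap hM m + chiMap hM m' := by
  ext a; simp [hM.smul_add]

theorem chiMap_neg (hM : IsLMod A M s) (m : M) :
    chiMap hM (-m) = -(chiMap hM m) := by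
  ext a; simp [hM.smul_neg']

end Aux

/-- Let `A` be an idempotent graded ring and `M` a unital
torsion-free graded left `A`-module.  Then `χ_M : M → A·HOM_A(A,M)`,
`χ_M(m)(a) = a·m`, is an isomorphism of graded left `A`-modules of degree `e`
onto `A·HOM_A(A,M)` (the `A`-part of `HOM_A(A,M)` under `(a·f)(x) = f(xa)`):
it lands in `A·HOM_A(A,M)`, is additive, `A`-linear, graded of degree `e`,
injective, and surjective onto `A·HOM_A(A,M)`. -/
theorem chi_isomorphism
    {Γ A M : Type*} [Group Γ] [DecidableEq Γ] [NonUnitalRing A] [AddCommGroup M]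
    (𝒜 : Γ → AddSubgroup A) (ℳ : Γ → AddSubgroup M)
    [DirectSum.Decomposition 𝒜] [DirectSum.Decomposition ℳ]
    (s : A → M → M) (hM : IsLMod A M s)
    (hGA : IsGRing 𝒜) (hGM : IsGModL 𝒜 ℳ s)
    (hIdem : IsIdem A) (hU : IsUnitalL s) (hTF : IsTorsionFreeL s) :
    -- χ_M lands in A·HOM_A(A,M)
    (∀ m : M, chiMap hM m ∈
      smulHOM A (HOML (fun a x : A => a * x) s 𝒜 ℳ) (fun (a : A) (x : A) => x * a)) ∧
    -- χ_M is additive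
    (∀ m m' : M, chiMap hM (m + m') = chiMap hM m + chiMap hM m') ∧
    -- χ_M is left A-linear: χ_M(a·m) = a·χ_M(m)
    (∀ (a : A) (m : M) (x : A), chiMap hM (s a m) x = chiMap hM m (x * a)) ∧
    -- χ_M is graded of degree e: it sends M_σ into HOM_A(A,M)_σ
    (∀ σ : Γ, ∀ m ∈ ℳ σ, IsDegL 𝒜 ℳ σ (chiMap hM m)) ∧
    -- χ_M is injective
    Function.Injective (chiMap hM) ∧
    -- χ_M is surjective onto A·HOM_A(A,M)
    (∀ g ∈ smulHOM A (HOML (fun a x : A => a * x) s 𝒜 ℳ) (fun (a : A) (x : A) => x * a),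
      ∃ m : M, chiMap hM m = g) := by
  -- every chiMap m lies in HOM_A(A,M)
  have hHOML : ∀ m : M, chiMap hM m ∈ HOML (fun a x : A => a * x) s 𝒜 ℳ := by
    intro m
    induction m using DirectSum.Decomposition.inductionOn ℳ with
    | zero => rw [chiMap_zero]; exact zero_mem _
    | homogeneous mh =>
      rename_i σ
      apply AddSubgroup.subset_closure
      exact ⟨fun a x => hM.mul_smul a x (mh : M), σ, fun τ a ha => hGM ha mh.2⟩
    | add m m' hmem hmem' => rw [chiMap_add]; exact add_mem hmem hmem'
  -- every element of HOM_A(A,M) is A-linear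
  have hlin : ∀ f ∈ HOML (fun a x : A => a * x) s 𝒜 ℳ, ∀ (a x : A),
      f (a * x) = s a (f x) := by
    intro f hf
    induction hf using AddSubgroup.closure_induction with
    | mem g hg => exact hg.1
    | zero => intro a x; simp [hM.smul_zero']
    | add g g' _ _ hg hg' => intro a x; simp [hg a x, hg' a x, hM.smul_add]
    | neg g _ hg => intro a x; simp [hg a x, hM.smul_neg']
  refine ⟨?_, chiMap_add hM, ?_, ?_, ?_, ?_⟩
  · -- lands in A·HOM
    intro m
    induction hU m using AddSubgroup.closure_induction with
    | mem x hx =>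
      obtain ⟨a, m', rfl⟩ := hx
      apply AddSubgroup.subset_closure
      exact ⟨a, chiMap hM m', hHOML m', fun x => show s x (s a m') = s (x * a) m' from (hM.mul_smul x a m').symm⟩
    | zero => rw [chiMap_zero]; exact zero_mem _
    | add x y _ _ hx hy => rw [chiMap_add]; exact add_mem hx hy
    | neg x _ hx => rw [chiMap_neg]; exact neg_mem hx
  · -- A-linear
    intro a m x
    exact (hM.mul_smul x a m).symm
  · -- graded of degree σ
    intro σ m hm τ a ha
    exact hGM ha hm
  · -- injective
    intro m m' h
    have : ∀ a : A, s a (m - m') = 0 := by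
      intro a
      have := DFunLike.congr_fun h a
      simp only [chiMap_apply] at this
      rw [sub_eq_add_neg, hM.smul_add, hM.smul_neg', this, add_neg_cancel]
    have := hTF _ this
    exact sub_eq_zero.mp this
  · -- surjective onto A·HOM
    intro g hg
    induction hg using AddSubgroup.closure_induction with
    | mem g hg =>
      obtain ⟨c, f, hf, hgf⟩ := hg
      refine ⟨f c, ?_⟩
      ext x
      simp only [chiMap_apply, hgf x]
      exact (hlin f hf x c).symm
    | zero => exact ⟨0, chiMap_zero hM⟩
    | add g g' _ _ hg hg' =>
      obtain ⟨m, rfl⟩ := hg; obtain ⟨m', rfl⟩ := hg'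
      exact ⟨m + m', chiMap_add hM m m'⟩
    | neg g _ hg =>
      obtain ⟨m, rfl⟩ := hg
      exact ⟨-m, chiMap_neg hM m⟩
end

section
/- Let (A,B,P,Q,μ,ν) be a graded Morita context with idempotent graded rings A, B, unital graded bimodules P, Q, and surjective trace maps. Then the left A-module P generates A: Tr_A(P) = A. Consequently P/t_A(P) is a generator of the category of unital torsion-free graded left A-modules. -/
/-!
Common infrastructure: non-unital (graded) rings, non-unital graded modules
(given by explicit action functions), graded homomorphisms of all degrees,
traces, torsion submodules, balanced tensor products, and graded Morita
contexts, following Dokuchaev–Simón, "Graded Equivalence for Graded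
Idempotent Rings".
-/

open DirectSum

universe u v

/-- Key lemma: for any unital graded left `A`-module `N`, `Tr_N(P) = N`. -/
theorem traceL_eq_top_aux
    {Γ : Type v} {A B P Q : Type u} [Group Γ] [DecidableEq Γ]
    [NonUnitalRing A] [NonUnitalRing B] [AddCommGroup P] [AddCommGroup Q]
    (𝒜 : Γ → AddSubgroup A) (ℬ : Γ → AddSubgroup B)
    (𝓟 : Γ → AddSubgroup P) (𝒬 : Γ → AddSubgroup Q)
    [DirectSum.Decomposition 𝒜] [DirectSum.Decomposition ℬ]
    [DirectSum.Decomposition 𝓟] [DirectSum.Decomposition 𝒬]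
    (ap : A → P → P) (pb : P → B → P) (bq : B → Q → Q) (qa : Q → A → Q)
    (pr : P → Q → A) (br : Q → P → B)
    (ctx : GMoritaCtx Γ A B P Q 𝒜 ℬ 𝓟 𝒬 ap pb bq qa pr br)
    (N : Type u) [AddCommGroup N] (sN : A → N → N) (𝒩 : Γ → AddSubgroup N)
    [DirectSum.Decomposition 𝒩] (hmod : IsLMod A N sN) (huni : IsUnitalL sN)
    (hgr : IsGModL 𝒜 𝒩 sN) :
    ∀ n : N, n ∈ TraceL ap sN 𝓟 𝒩 := by
  -- basic zero facts
  have sN_zero_right : ∀ a : A, sN a (0 : N) = 0 := by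
    intro a
    have h := hmod.smul_add a 0 0
    rw [add_zero] at h
    exact left_eq_add.mp h
  have sN_zero_left : ∀ n : N, sN (0 : A) n = 0 := by
    intro n
    have h := hmod.add_smul 0 0 n
    rw [add_zero] at h
    exact left_eq_add.mp h
  have pr_zero_right : ∀ p : P, pr p (0 : Q) = 0 := by
    intro p
    have h := ctx.pr_addr p 0 0
    rw [add_zero] at h
    exact left_eq_add.mp h
  -- the basic maps p ↦ sN (pr p q) m
  set g : Q → N → (P →+ N) := fun q m =>
    AddMonoidHom.mk' (fun p => sN (pr p q) m)
      (fun p p' => by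
        show sN (pr (p + p') q) m = sN (pr p q) m + sN (pr p' q) m
        rw [ctx.pr_addl, hmod.add_smul]) with hg_def
  have hg_apply : ∀ (q : Q) (m : N) (p : P), g q m p = sN (pr p q) m := fun _ _ _ => rfl
  have hg : ∀ (q : Q) (m : N), g q m ∈ HOML ap sN 𝓟 𝒩 := by
    intro q
    induction q using DirectSum.Decomposition.inductionOn 𝒬 with
    | zero =>
      intro m
      have : g 0 m = 0 := by
        ext p
        simp only [hg_apply, pr_zero_right, sN_zero_left, AddMonoidHom.zero_apply]
      rw [this]
      exact zero_mem _
    | homogeneous qh =>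
      rename_i τ
      intro m
      induction m using DirectSum.Decomposition.inductionOn 𝒩 with
      | zero =>
        have : g (qh : Q) 0 = 0 := by
          ext p
          simp only [hg_apply, sN_zero_right, AddMonoidHom.zero_apply]
        rw [this]
        exact zero_mem _
      | homogeneous mh =>
        rename_i ρ
        apply AddSubgroup.subset_closure
        refine ⟨?_, ?_⟩
        · intro a p
          simp only [hg_apply]
          rw [ctx.pr_linl, hmod.mul_smul]
        · refine ⟨τ * ρ, fun σ p hp => ?_⟩
          have h1 : pr p (qh : Q) ∈ 𝒜 (σ * τ) := ctx.pr_graded hp qh.2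
          have h2 := hgr h1 mh.2
          rw [mul_assoc] at h2
          exact h2
      | add m m' hmem hmem' =>
        have : g (qh : Q) (m + m') = g (qh : Q) m + g (qh : Q) m' := by
          ext p
          simp only [hg_apply, AddMonoidHom.add_apply, hmod.smul_add]
        rw [this]
        exact add_mem hmem hmem'
    | add q q' ih ih' =>
      intro m
      have : g (q + q') m = g q m + g q' m := by
        ext p
        simp only [hg_apply, AddMonoidHom.add_apply, ctx.pr_addr, hmod.add_smul]
      rw [this]
      exact add_mem (ih m) (ih' m)
  -- every sN a m lies in the trace
  have hsmul : ∀ (a : A) (m : N), sN a m ∈ TraceL ap sN 𝓟 𝒩 := by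
    intro a m
    set μm : A →+ N := AddMonoidHom.mk' (fun a => sN a m) (fun a b => hmod.add_smul a b m)
      with hμm
    have : a ∈ (TraceL ap sN 𝓟 𝒩).comap μm := by
      refine AddSubgroup.closure_le _ |>.mpr ?_ (ctx.sur_pr a)
      rintro x ⟨p, q, rfl⟩
      show μm (pr p q) ∈ TraceL ap sN 𝓟 𝒩
      apply AddSubgroup.subset_closure
      exact ⟨g q m, hg q m, p, rfl⟩
    exact this
  -- conclude using unitality
  intro n
  refine AddSubgroup.closure_le _ |>.mpr ?_ (huni n)
  rintro x ⟨a, m, rfl⟩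
  exact hsmul a m

/-- Given a graded Morita context `(A,B,P,Q,μ,ν)` with
idempotent graded rings, unital graded bimodules and surjective trace maps,
the left `A`-module `P` generates `A`: `Tr_A(P) = A`.  Consequently
`P/t_A(P)` is a generator of the category of unital torsion-free graded left
`A`-modules: for every such module `N` one has `Tr_N(P/t_A(P)) = N`
(note that `Tr_N(P/t_A(P)) = Tr_N(P)` since every graded homomorphism
`P → N` into a torsion-free module kills `t_A(P)`). -/
theorem P_generates_A_and_category
    {Γ : Type v} {A B P Q : Type u} [Group Γ] [DecidableEq Γ]
    [NonUnitalRing A] [NonUnitalRing B] [AddCommGroup P] [AddCommGroup Q]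
    (𝒜 : Γ → AddSubgroup A) (ℬ : Γ → AddSubgroup B)
    (𝓟 : Γ → AddSubgroup P) (𝒬 : Γ → AddSubgroup Q)
    [DirectSum.Decomposition 𝒜] [DirectSum.Decomposition ℬ]
    [DirectSum.Decomposition 𝓟] [DirectSum.Decomposition 𝒬]
    (ap : A → P → P) (pb : P → B → P) (bq : B → Q → Q) (qa : Q → A → Q)
    (pr : P → Q → A) (br : Q → P → B)
    (ctx : GMoritaCtx Γ A B P Q 𝒜 ℬ 𝓟 𝒬 ap pb bq qa pr br) :
    -- `Tr_A(P) = A`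
    (∀ a : A, a ∈ TraceL ap (fun a x : A => a * x) 𝓟 𝒜) ∧
    -- `P/t_A(P)` generates every unital torsion-free graded left `A`-module
    (∀ (N : Type u) [AddCommGroup N], ∀ (sN : A → N → N) (𝒩 : Γ → AddSubgroup N)
      [DirectSum.Decomposition 𝒩], IsLMod A N sN → IsUnitalL sN →
      IsTorsionFreeL sN → IsGModL 𝒜 𝒩 sN →
      ∀ n : N, n ∈ TraceL ap sN 𝓟 𝒩) := by
  have hAmod : IsLMod A A (fun a x : A => a * x) :=
    ⟨fun a m n => mul_add a m n, fun a b m => add_mul a b m, fun a b m => mul_assoc a b m⟩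
  have hAuni : IsUnitalL (fun a x : A => a * x) := ctx.idemA
  have hAgr : IsGModL 𝒜 𝒜 (fun a x : A => a * x) := fun σ τ a m ha hm => ctx.gradeA ha hm
  constructor
  · exact traceL_eq_top_aux 𝒜 ℬ 𝓟 𝒬 ap pb bq qa pr br ctx A
      (fun a x : A => a * x) 𝒜 hAmod hAuni hAgr
  · intro N _ sN 𝒩 _ hmod huni _ hgr
    exact traceL_eq_top_aux 𝒜 ℬ 𝓟 𝒬 ap pb bq qa pr br ctx N sN 𝒩 hmod huni hgr
end

section
/- Let (A,B,P,Q,μ,ν) be a graded Morita context with idempotent graded rings, unital bimodules and surjective trace maps. Then ker μ is a torsion A-bimodule: every element of ker μ ⊆ P⊗_B Q is annihilated by A on the left (and similarly ker ν is annihilated by B). -/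
/-!
Common infrastructure: non-unital (graded) rings, non-unital graded modules
(given by explicit action functions), graded homomorphisms of all degrees,
traces, torsion submodules, balanced tensor products, and graded Morita
contexts, following Dokuchaev–Simón, "Graded Equivalence for Graded
Idempotent Rings".
-/

open DirectSum

section TenAux

variable {B : Type*} {P Q : Type*} [AddCommGroup P] [AddCommGroup Q]
  {rs : P → B → P} {ls : B → Q → Q}

lemma tmul_add_left (p p' : P) (q : Q) :
    (tmul (p + p') q : Ten B rs ls) = tmul p q + tmul p' q := by
  show QuotientAddGroup.mk _ = QuotientAddGroup.mk _ + QuotientAddGroup.mk _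
  rw [← QuotientAddGroup.mk_add, QuotientAddGroup.eq_iff_sub_mem]
  refine AddSubgroup.subset_closure (Or.inl (Or.inl ⟨p, p', q, ?_⟩))
  abel

lemma tmul_add_right (p : P) (q q' : Q) :
    (tmul p (q + q') : Ten B rs ls) = tmul p q + tmul p q' := by
  show QuotientAddGroup.mk _ = QuotientAddGroup.mk _ + QuotientAddGroup.mk _
  rw [← QuotientAddGroup.mk_add, QuotientAddGroup.eq_iff_sub_mem]
  refine AddSubgroup.subset_closure (Or.inl (Or.inr ⟨p, q, q', ?_⟩))
  abel

lemma tmul_bal (p : P) (b : B) (q : Q) :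
    (tmul (rs p b) q : Ten B rs ls) = tmul p (ls b q) := by
  show QuotientAddGroup.mk _ = QuotientAddGroup.mk _
  rw [QuotientAddGroup.eq_iff_sub_mem]
  exact AddSubgroup.subset_closure (Or.inr ⟨p, b, q, rfl⟩)

lemma ten_ind {motive : Ten B rs ls → Prop}
    (h0 : motive 0) (htm : ∀ p q, motive (tmul p q))
    (hneg : ∀ x, motive x → motive (-x))
    (hadd : ∀ x y, motive x → motive y → motive (x + y)) :
    ∀ t : Ten B rs ls, motive t := by
  intro t
  induction t using QuotientAddGroup.induction_on with
  | H x =>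
    induction x using FreeAbelianGroup.induction_on with
    | zero => simpa using h0
    | of pq => exact htm pq.1 pq.2
    | neg y hy => simpa using hneg _ hy
    | add y z hy hz => simpa using hadd _ _ hy hz

end TenAux

universe u v

/-- For a graded Morita context `(A,B,P,Q,μ,ν)` with
idempotent graded rings, unital bimodules and surjective trace maps, the
kernel of `μ : P ⊗_B Q → A` is left `A`-torsion and the kernel of
`ν : Q ⊗_A P → B` is left `B`-torsion. -/
theorem ker_trace_maps_torsion
    {Γ : Type v} {A B P Q : Type u} [Group Γ] [DecidableEq Γ]
    [NonUnitalRing A] [NonUnitalRing B] [AddCommGroup P] [AddCommGroup Q]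
    (𝒜 : Γ → AddSubgroup A) (ℬ : Γ → AddSubgroup B)
    (𝓟 : Γ → AddSubgroup P) (𝒬 : Γ → AddSubgroup Q)
    [DirectSum.Decomposition 𝒜] [DirectSum.Decomposition ℬ]
    [DirectSum.Decomposition 𝓟] [DirectSum.Decomposition 𝒬]
    (ap : A → P → P) (pb : P → B → P) (bq : B → Q → Q) (qa : Q → A → Q)
    (pr : P → Q → A) (br : Q → P → B)
    (ctx : GMoritaCtx Γ A B P Q 𝒜 ℬ 𝓟 𝒬 ap pb bq qa pr br)
    -- `μ : P ⊗_B Q → A` is the map induced by `pr`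
    (μ : Ten B pb bq →+ A) (hμ : ∀ (p : P) (q : Q), μ (tmul p q) = pr p q)
    -- `ν : Q ⊗_A P → B` is the map induced by `br`
    (ν : Ten A qa ap →+ B) (hν : ∀ (q : Q) (p : P), ν (tmul q p) = br q p)
    -- the left `A`-action on `P ⊗_B Q`, `a·(p⊗q) = (ap)⊗q`
    (aS : A → Ten B pb bq →+ Ten B pb bq)
    (haS : ∀ (a : A) (p : P) (q : Q), aS a (tmul p q) = tmul (ap a p) q)
    -- the left `B`-action on `Q ⊗_A P`, `b·(q⊗p) = (bq)⊗p`
    (bS : B → Ten A qa ap →+ Ten A qa ap)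
    (hbS : ∀ (b : B) (q : Q) (p : P), bS b (tmul q p) = tmul (bq b q) p) :
    (∀ t : Ten B pb bq, μ t = 0 → ∀ a : A, aS a t = 0) ∧
    (∀ t : Ten A qa ap, ν t = 0 → ∀ b : B, bS b t = 0) := by
  -- basic zero lemmas
  have ap_zero : ∀ p : P, ap 0 p = 0 := by
    intro p
    have h := ctx.lmodP.add_smul 0 0 p
    rw [add_zero] at h
    exact left_eq_add.mp h
  have bq_zero : ∀ q : Q, bq 0 q = 0 := by
    intro q
    have h := ctx.lmodQ.add_smul 0 0 q
    rw [add_zero] at h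
    exact left_eq_add.mp h
  have tmul_zl : ∀ q : Q, (tmul 0 q : Ten B pb bq) = 0 := by
    intro q
    have h := tmul_add_left (rs := pb) (ls := bq) (0 : P) 0 q
    rw [add_zero] at h
    exact left_eq_add.mp h
  have tmul_zl' : ∀ p : P, (tmul (0 : Q) p : Ten A qa ap) = 0 := by
    intro p
    have h := tmul_add_left (rs := qa) (ls := ap) (0 : Q) 0 p
    rw [add_zero] at h
    exact left_eq_add.mp h
  -- additivity of the actions in the ring variable
  have aS_add : ∀ (a a' : A) (t : Ten B pb bq), aS (a + a') t = aS a t + aS a' t := by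
    intro a a'
    refine ten_ind (by simp) (fun p q => ?_) (fun x hx => ?_) (fun x y hx hy => ?_)
    · rw [haS, ctx.lmodP.add_smul, tmul_add_left, haS, haS]
    · rw [map_neg, map_neg, map_neg, hx, neg_add]
    · rw [map_add, map_add, map_add, hx, hy]; abel
  have aS_zero : ∀ t : Ten B pb bq, aS 0 t = 0 := by
    refine ten_ind (by simp) (fun p q => ?_) (fun x hx => by rw [map_neg, hx, neg_zero])
      (fun x y hx hy => by rw [map_add, hx, hy, add_zero])
    rw [haS, ap_zero, tmul_zl]
  have aS_neg : ∀ (a : A) (t : Ten B pb bq), aS (-a) t = -aS a t := by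
    intro a t
    have h := aS_add a (-a) t
    rw [add_neg_cancel, aS_zero] at h
    exact eq_neg_of_add_eq_zero_right h.symm
  have bS_add : ∀ (b b' : B) (t : Ten A qa ap), bS (b + b') t = bS b t + bS b' t := by
    intro b b'
    refine ten_ind (by simp) (fun q p => ?_) (fun x hx => ?_) (fun x y hx hy => ?_)
    · rw [hbS, ctx.lmodQ.add_smul, tmul_add_left, hbS, hbS]
    · rw [map_neg, map_neg, map_neg, hx, neg_add]
    · rw [map_add, map_add, map_add, hx, hy]; abel
  have bS_zero : ∀ t : Ten A qa ap, bS 0 t = 0 := by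
    refine ten_ind (by simp) (fun q p => ?_) (fun x hx => by rw [map_neg, hx, neg_zero])
      (fun x y hx hy => by rw [map_add, hx, hy, add_zero])
    rw [hbS, bq_zero, tmul_zl']
  have bS_neg : ∀ (b : B) (t : Ten A qa ap), bS (-b) t = -bS b t := by
    intro b t
    have h := bS_add b (-b) t
    rw [add_neg_cancel, bS_zero] at h
    exact eq_neg_of_add_eq_zero_right h.symm
  -- key identities on pairing generators
  have keyA : ∀ (p : P) (q : Q) (t : Ten B pb bq),
      aS (pr p q) t = tmul p (qa q (μ t)) := by
    intro p q
    have hqa : ∀ a a' : A, (tmul p (qa q (a + a')) : Ten B pb bq)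
        = tmul p (qa q a) + tmul p (qa q a') := by
      intro a a'
      rw [ctx.rmodQ.smul_add, tmul_add_right]
    set g : A →+ Ten B pb bq := AddMonoidHom.mk' (fun a => tmul p (qa q a)) hqa with hg
    have hgap : ∀ a : A, g a = tmul p (qa q a) := fun _ => rfl
    refine ten_ind ?_ (fun p' q' => ?_) (fun x hx => ?_) (fun x y hx hy => ?_)
    · rw [map_zero, map_zero, ← hgap, map_zero]
    · rw [haS, ← ctx.assoc1 p q p', tmul_bal, ← ctx.assoc2 q p' q', hμ]
    · rw [map_neg, hx, ← hgap, ← hgap, map_neg, map_neg]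
    · rw [map_add, hx, hy, ← hgap, ← hgap, ← hgap, map_add, map_add]
  have keyB : ∀ (q : Q) (p : P) (t : Ten A qa ap),
      bS (br q p) t = tmul q (pb p (ν t)) := by
    intro q p
    have hpb : ∀ b b' : B, (tmul q (pb p (b + b')) : Ten A qa ap)
        = tmul q (pb p b) + tmul q (pb p b') := by
      intro b b'
      rw [ctx.rmodP.smul_add, tmul_add_right]
    set g : B →+ Ten A qa ap := AddMonoidHom.mk' (fun b => tmul q (pb p b)) hpb with hg
    have hgap : ∀ b : B, g b = tmul q (pb p b) := fun _ => rfl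
    refine ten_ind ?_ (fun q' p' => ?_) (fun x hx => ?_) (fun x y hx hy => ?_)
    · rw [map_zero, map_zero, ← hgap, map_zero]
    · rw [hbS, ← ctx.assoc2 q p q', tmul_bal, ← ctx.assoc1 p q' p', hν]
    · rw [map_neg, hx, ← hgap, ← hgap, map_neg, map_neg]
    · rw [map_add, hx, hy, ← hgap, ← hgap, ← hgap, map_add, map_add]
  -- zero action lemmas for the module structures
  have qa_zero : ∀ q : Q, qa q 0 = 0 := by
    intro q
    have h := ctx.rmodQ.smul_add q 0 0
    rw [add_zero] at h
    exact left_eq_add.mp h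
  have pb_zero : ∀ p : P, pb p 0 = 0 := by
    intro p
    have h := ctx.rmodP.smul_add p 0 0
    rw [add_zero] at h
    exact left_eq_add.mp h
  have tmul_zr : ∀ p : P, (tmul p (0 : Q) : Ten B pb bq) = 0 := by
    intro p
    have h := tmul_add_right (rs := pb) (ls := bq) p 0 0
    rw [add_zero] at h
    exact left_eq_add.mp h
  have tmul_zr' : ∀ q : Q, (tmul q (0 : P) : Ten A qa ap) = 0 := by
    intro q
    have h := tmul_add_right (rs := qa) (ls := ap) q 0 0
    rw [add_zero] at h
    exact left_eq_add.mp h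
  constructor
  · intro t ht a
    -- the set of `a` annihilating `t` is a subgroup containing all `pr p q`
    let T : AddSubgroup A :=
      { carrier := {a : A | aS a t = 0}
        zero_mem' := aS_zero t
        add_mem' := fun {x y} hx hy => by
          show aS (x + y) t = 0
          rw [aS_add, hx, hy, add_zero]
        neg_mem' := fun {x} hx => by
          show aS (-x) t = 0
          rw [aS_neg, hx, neg_zero] }
    have : a ∈ T := by
      refine (AddSubgroup.closure_le T).mpr ?_ (ctx.sur_pr a)
      rintro x ⟨p, q, rfl⟩
      show aS (pr p q) t = 0
      rw [keyA, ht, qa_zero, tmul_zr]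
    exact this
  · intro t ht b
    let T : AddSubgroup B :=
      { carrier := {b : B | bS b t = 0}
        zero_mem' := bS_zero t
        add_mem' := fun {x y} hx hy => by
          show bS (x + y) t = 0
          rw [bS_add, hx, hy, add_zero]
        neg_mem' := fun {x} hx => by
          show bS (-x) t = 0
          rw [bS_neg, hx, neg_zero] }
    have : b ∈ T := by
      refine (AddSubgroup.closure_le T).mpr ?_ (ctx.sur_br b)
      rintro x ⟨q, p, rfl⟩
      show bS (br q p) t = 0
      rw [keyB, ht, pb_zero, tmul_zr']
    exact this
end

section
/- Let (A,B,P,Q,μ,ν) be a graded Morita context with idempotent graded rings, unital bimodules and surjective trace maps. Then the map ψ : Q → B·HOM_A(P,A), q ↦ ⟨−,q⟩, is a (B,A)-bimodule graded epimorphism of degree e, and its kernel is left B-torsion: if ψ(q) = 0 then Bq = 0. -/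
/-!
Common infrastructure: non-unital (graded) rings, non-unital graded modules
(given by explicit action functions), graded homomorphisms of all degrees,
traces, torsion submodules, balanced tensor products, and graded Morita
contexts, following Dokuchaev–Simón, "Graded Equivalence for Graded
Idempotent Rings".
-/

open DirectSum

universe u v

variable {Γ : Type v} {A B P Q : Type u} [Group Γ] [DecidableEq Γ]
    [NonUnitalRing A] [NonUnitalRing B] [AddCommGroup P] [AddCommGroup Q]
    {𝒜 : Γ → AddSubgroup A} {ℬ : Γ → AddSubgroup B}
    {𝓟 : Γ → AddSubgroup P} {𝒬 : Γ → AddSubgroup Q}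
    {ap : A → P → P} {pb : P → B → P} {bq : B → Q → Q} {qa : Q → A → Q}
    {pr : P → Q → A} {br : Q → P → B}

/-- The map `ψ(q) = ⟨-,q⟩ : P →+ A`. -/
def psiMap (ctx : GMoritaCtx Γ A B P Q 𝒜 ℬ 𝓟 𝒬 ap pb bq qa pr br) (q : Q) : P →+ A :=
  AddMonoidHom.mk' (fun p => pr p q) (fun p p' => ctx.pr_addl p p' q)

section AuxLemmas

variable (ctx : GMoritaCtx Γ A B P Q 𝒜 ℬ 𝓟 𝒬 ap pb bq qa pr br)

include ctx

set_option linter.unusedSectionVars false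

lemma pr_zero_right (p : P) : pr p (0 : Q) = 0 := by
  have h := ctx.pr_addr p 0 0
  rw [add_zero] at h
  exact left_eq_add.mp h

lemma pr_neg_right (p : P) (q : Q) : pr p (-q) = -pr p q := by
  have h := ctx.pr_addr p q (-q)
  rw [add_neg_cancel, pr_zero_right ctx] at h
  exact eq_neg_of_add_eq_zero_right h.symm

lemma pb_zero_right (p : P) : pb p (0 : B) = 0 := by
  have h := ctx.rmodP.smul_add p 0 0
  rw [add_zero] at h
  exact left_eq_add.mp h

lemma pb_neg_right (p : P) (b : B) : pb p (-b) = -pb p b := by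
  have h := ctx.rmodP.smul_add p b (-b)
  rw [add_neg_cancel, pb_zero_right ctx] at h
  exact eq_neg_of_add_eq_zero_right h.symm

lemma qa_zero_right (q : Q) : qa q (0 : A) = 0 := by
  have h := ctx.rmodQ.smul_add q 0 0
  rw [add_zero] at h
  exact left_eq_add.mp h

lemma bq_zero_left (q : Q) : bq (0 : B) q = 0 := by
  have h := ctx.lmodQ.add_smul 0 0 q
  rw [add_zero] at h
  exact left_eq_add.mp h

lemma bq_neg_left (b : B) (q : Q) : bq (-b) q = -bq b q := by
  have h := ctx.lmodQ.add_smul b (-b) q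
  rw [add_neg_cancel, bq_zero_left ctx] at h
  exact eq_neg_of_add_eq_zero_right h.symm

lemma psi_add (q q' : Q) : psiMap ctx (q + q') = psiMap ctx q + psiMap ctx q' := by
  ext p
  exact ctx.pr_addr p q q'

/-- `ψ` bundled as an additive monoid hom. -/
def psiHom : Q →+ (P →+ A) :=
  AddMonoidHom.mk' (psiMap ctx) (psi_add ctx)

lemma psi_zero : psiMap ctx (0 : Q) = 0 := by
  ext p; exact pr_zero_right ctx p

lemma psi_neg (q : Q) : psiMap ctx (-q) = -psiMap ctx q := by
  ext p; exact pr_neg_right ctx p q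

/-- every element of `HOM_A(P,A)` is `A`-linear. -/
lemma homl_lin : ∀ f ∈ HOML ap (fun a x : A => a * x) 𝓟 𝒜,
    IsLinL ap (fun a x : A => a * x) f := by
  intro f hf
  induction hf using AddSubgroup.closure_induction with
  | mem g hg => exact hg.1
  | zero => intro a m; simp
  | add g h _ _ ihg ihh =>
      intro a m
      simp only [AddMonoidHom.add_apply, ihg a m, ihh a m, mul_add]
  | neg g _ ihg =>
      intro a m
      simp only [AddMonoidHom.neg_apply, ihg a m, mul_neg]

lemma psi_mem_homl [DirectSum.Decomposition 𝒬] (q : Q) :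
    psiMap ctx q ∈ HOML ap (fun a x : A => a * x) 𝓟 𝒜 := by
  have key : ∀ (σ : Γ), ∀ x ∈ 𝒬 σ,
      psiMap ctx x ∈ HOML ap (fun a x : A => a * x) 𝓟 𝒜 := by
    intro σ x hx
    exact AddSubgroup.subset_closure
      ⟨fun a p => ctx.pr_linl a p x, σ, fun τ p hp => ctx.pr_graded hp hx⟩
  haveI : ∀ (i : Γ) (x : ↥(𝒬 i)), Decidable (x ≠ 0) := fun _ _ => Classical.dec _
  have hq := DirectSum.sum_support_decompose 𝒬 q
  have : psiMap ctx q = psiHom ctx q := rfl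
  rw [this, ← hq, map_sum]
  exact AddSubgroup.sum_mem _ fun i _ => key i _ (SetLike.coe_mem _)

lemma psi_mem_smul [DirectSum.Decomposition 𝒬] (q : Q) :
    psiMap ctx q ∈
      smulHOM B (HOML ap (fun a x : A => a * x) 𝓟 𝒜) (fun (b : B) (p : P) => pb p b) := by
  have hq := ctx.unitalQl q
  induction hq using AddSubgroup.closure_induction with
  | mem x hx =>
      obtain ⟨b, q', rfl⟩ := hx
      exact AddSubgroup.subset_closure
        ⟨b, psiMap ctx q', psi_mem_homl ctx q', fun p => (ctx.pr_bal p b q').symm⟩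
  | zero => rw [psi_zero ctx]; exact zero_mem _
  | add x y _ _ ihx ihy => rw [psi_add ctx]; exact add_mem ihx ihy
  | neg x _ ihx => rw [psi_neg ctx]; exact neg_mem ihx

/-- For any `A`-linear `f` and `b : B`, `f(-·b)` is represented by some `q`. -/
lemma exists_rep (f : P →+ A) (hf : IsLinL ap (fun a x : A => a * x) f) (b : B) :
    ∃ q : Q, ∀ p : P, f (pb p b) = pr p q := by
  have hb := ctx.sur_br b
  induction hb using AddSubgroup.closure_induction with
  | mem x hx =>
      obtain ⟨q', p', rfl⟩ := hx
      refine ⟨qa q' (f p'), fun p => ?_⟩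
      rw [ctx.assoc1, hf, ctx.pr_linr]
  | zero =>
      refine ⟨0, fun p => ?_⟩
      rw [pb_zero_right ctx, map_zero, pr_zero_right ctx]
  | add x y _ _ ihx ihy =>
      obtain ⟨q1, h1⟩ := ihx
      obtain ⟨q2, h2⟩ := ihy
      refine ⟨q1 + q2, fun p => ?_⟩
      rw [ctx.rmodP.smul_add, map_add, h1, h2, ctx.pr_addr]
  | neg x _ ihx =>
      obtain ⟨q1, h1⟩ := ihx
      refine ⟨-q1, fun p => ?_⟩
      rw [pb_neg_right ctx, map_neg, h1, pr_neg_right ctx]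

end AuxLemmas

/-- For a graded Morita context with idempotent graded rings,
unital bimodules and surjective trace maps, the map
`ψ : Q → B·HOM_A(P,A)`, `q ↦ ⟨-,q⟩`, is a `(B,A)`-bimodule graded epimorphism
of degree `e` with left `B`-torsion kernel. -/
theorem psi_epimorphism_torsion_kernel
    [DirectSum.Decomposition 𝒜] [DirectSum.Decomposition ℬ]
    [DirectSum.Decomposition 𝓟] [DirectSum.Decomposition 𝒬]
    (ctx : GMoritaCtx Γ A B P Q 𝒜 ℬ 𝓟 𝒬 ap pb bq qa pr br) :
    -- ψ lands in `B·HOM_A(P,A)`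
    (∀ q : Q, psiMap ctx q ∈
      smulHOM B (HOML ap (fun a x : A => a * x) 𝓟 𝒜) (fun (b : B) (p : P) => pb p b)) ∧
    -- ψ is additive
    (∀ q q' : Q, psiMap ctx (q + q') = psiMap ctx q + psiMap ctx q') ∧
    -- ψ is left `B`-linear: `ψ(bq) = b·ψ(q)` where `(b·f)(p) = f(pb)`
    (∀ (b : B) (q : Q) (p : P), psiMap ctx (bq b q) p = psiMap ctx q (pb p b)) ∧
    -- ψ is right `A`-linear: `ψ(qa) = ψ(q)a` where `(fa)(p) = f(p)a`
    (∀ (q : Q) (a : A) (p : P), psiMap ctx (qa q a) p = psiMap ctx q p * a) ∧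
    -- ψ is graded of degree `e`: it sends `Q_σ` into `HOM_A(P,A)_σ`
    (∀ σ : Γ, ∀ q ∈ 𝒬 σ, IsDegL 𝓟 𝒜 σ (psiMap ctx q)) ∧
    -- ψ is surjective onto `B·HOM_A(P,A)`
    (∀ g ∈ smulHOM B (HOML ap (fun a x : A => a * x) 𝓟 𝒜) (fun (b : B) (p : P) => pb p b),
      ∃ q : Q, psiMap ctx q = g) ∧
    -- the kernel of ψ is left `B`-torsion
    (∀ q : Q, psiMap ctx q = 0 → ∀ b : B, bq b q = 0) := by
  refine ⟨psi_mem_smul ctx, psi_add ctx, ?_, ?_, ?_, ?_, ?_⟩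
  · intro b q p
    exact (ctx.pr_bal p b q).symm
  · intro q a p
    exact ctx.pr_linr p q a
  · intro σ q hq τ p hp
    exact ctx.pr_graded hp hq
  · intro g hg
    induction hg using AddSubgroup.closure_induction with
    | mem x hx =>
        obtain ⟨b, f, hf, hx⟩ := hx
        obtain ⟨q, hq⟩ := exists_rep ctx f (homl_lin ctx f hf) b
        refine ⟨q, ?_⟩
        ext p
        rw [hx p, hq p]
        rfl
    | zero => exact ⟨0, psi_zero ctx⟩
    | add x y _ _ ihx ihy =>
        obtain ⟨q1, h1⟩ := ihx
        obtain ⟨q2, h2⟩ := ihy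
        exact ⟨q1 + q2, by rw [psi_add ctx, h1, h2]⟩
    | neg x _ ihx =>
        obtain ⟨q1, h1⟩ := ihx
        exact ⟨-q1, by rw [psi_neg ctx, h1]⟩
  · intro q hq b
    have hpr : ∀ p : P, pr p q = 0 := fun p => DFunLike.congr_fun hq p
    have hb := ctx.sur_br b
    induction hb using AddSubgroup.closure_induction with
    | mem x hx =>
        obtain ⟨q', p', rfl⟩ := hx
        rw [← ctx.assoc2, hpr p', qa_zero_right ctx]
    | zero => exact bq_zero_left ctx q
    | add x y _ _ ihx ihy => rw [ctx.lmodQ.add_smul, ihx, ihy, add_zero]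
    | neg x _ ihx => rw [bq_neg_left ctx, ihx, neg_zero]
end

section
/- Let (A,B,P,Q,μ,ν) be a graded Morita context with idempotent torsion-free graded rings A, B, unital torsion-free bimodules P, Q, and surjective trace maps. Then the context is non-degenerate: ⟨P,q⟩ = 0 implies q = 0, ⟨p,Q⟩ = 0 implies p = 0, [Q,p] = 0 implies p = 0, and [q,P] = 0 implies q = 0. -/
/-!
Common infrastructure: non-unital (graded) rings, non-unital graded modules
(given by explicit action functions), graded homomorphisms of all degrees,
traces, torsion submodules, balanced tensor products, and graded Morita
contexts, following Dokuchaev–Simón, "Graded Equivalence for Graded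
Idempotent Rings".
-/

open DirectSum

universe u v

/-- A graded Morita context with idempotent torsion-free
graded rings, unital torsion-free bimodules and surjective trace maps is
non-degenerate: all four pairings are faithful. -/
theorem context_nondegenerate
    {Γ : Type v} {A B P Q : Type u} [Group Γ] [DecidableEq Γ]
    [NonUnitalRing A] [NonUnitalRing B] [AddCommGroup P] [AddCommGroup Q]
    (𝒜 : Γ → AddSubgroup A) (ℬ : Γ → AddSubgroup B)
    (𝓟 : Γ → AddSubgroup P) (𝒬 : Γ → AddSubgroup Q)
    [DirectSum.Decomposition 𝒜] [DirectSum.Decomposition ℬ]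
    [DirectSum.Decomposition 𝓟] [DirectSum.Decomposition 𝒬]
    (ap : A → P → P) (pb : P → B → P) (bq : B → Q → Q) (qa : Q → A → Q)
    (pr : P → Q → A) (br : Q → P → B)
    (ctx : GMoritaCtx Γ A B P Q 𝒜 ℬ 𝓟 𝒬 ap pb bq qa pr br)
    -- `A` and `B` are torsion-free on both sides
    (hAl : IsTorsionFreeL (fun a x : A => a * x))
    (hAr : IsTorsionFreeR (fun x a : A => x * a))
    (hBl : IsTorsionFreeL (fun b x : B => b * x))
    (hBr : IsTorsionFreeR (fun x b : B => x * b))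
    -- `P` and `Q` are torsion-free on both sides
    (hPl : IsTorsionFreeL ap) (hPr : IsTorsionFreeR pb)
    (hQl : IsTorsionFreeL bq) (hQr : IsTorsionFreeR qa) :
    (∀ q : Q, (∀ p : P, pr p q = 0) → q = 0) ∧
    (∀ p : P, (∀ q : Q, pr p q = 0) → p = 0) ∧
    (∀ p : P, (∀ q : Q, br q p = 0) → p = 0) ∧
    (∀ q : Q, (∀ p : P, br q p = 0) → q = 0) := by
  -- zero lemmas
  have ap0 : ∀ p : P, ap 0 p = 0 := fun p => by
    have h := ctx.lmodP.add_smul 0 0 p; rw [add_zero] at h; exact (right_eq_add.mp h)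
  have pb0 : ∀ p : P, pb p 0 = 0 := fun p => by
    have h := ctx.rmodP.smul_add p 0 0; rw [add_zero] at h; exact (right_eq_add.mp h)
  have bq0 : ∀ q : Q, bq 0 q = 0 := fun q => by
    have h := ctx.lmodQ.add_smul 0 0 q; rw [add_zero] at h; exact (right_eq_add.mp h)
  have qa0 : ∀ q : Q, qa q 0 = 0 := fun q => by
    have h := ctx.rmodQ.smul_add q 0 0; rw [add_zero] at h; exact (right_eq_add.mp h)
  refine ⟨?_, ?_, ?_, ?_⟩
  · -- ∀ p, pr p q = 0 → q = 0
    intro q h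
    apply hQl
    intro b
    refine AddSubgroup.closure_induction ?_ (bq0 q) ?_ ?_ (ctx.sur_br b)
    · rintro x ⟨q', p, rfl⟩
      rw [← ctx.assoc2, h, qa0]
    · intro x y _ _ hx hy
      rw [ctx.lmodQ.add_smul, hx, hy, add_zero]
    · intro x _ hx
      have := ctx.lmodQ.add_smul x (-x) q
      rw [add_neg_cancel, bq0, hx, zero_add] at this
      exact this.symm
  · -- ∀ q, pr p q = 0 → p = 0
    intro p h
    apply hPr
    intro b
    refine AddSubgroup.closure_induction ?_ (pb0 p) ?_ ?_ (ctx.sur_br b)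
    · rintro x ⟨q, p', rfl⟩
      rw [ctx.assoc1, h, ap0]
    · intro x y _ _ hx hy
      rw [ctx.rmodP.smul_add, hx, hy, add_zero]
    · intro x _ hx
      have := ctx.rmodP.smul_add p x (-x)
      rw [add_neg_cancel, pb0, hx, zero_add] at this
      exact this.symm
  · -- ∀ q, br q p = 0 → p = 0
    intro p h
    apply hPl
    intro a
    refine AddSubgroup.closure_induction ?_ (ap0 p) ?_ ?_ (ctx.sur_pr a)
    · rintro x ⟨p', q, rfl⟩
      rw [← ctx.assoc1, h, pb0]
    · intro x y _ _ hx hy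
      rw [ctx.lmodP.add_smul, hx, hy, add_zero]
    · intro x _ hx
      have := ctx.lmodP.add_smul x (-x) p
      rw [add_neg_cancel, ap0, hx, zero_add] at this
      exact this.symm
  · -- ∀ p, br q p = 0 → q = 0
    intro q h
    apply hQr
    intro a
    refine AddSubgroup.closure_induction ?_ (qa0 q) ?_ ?_ (ctx.sur_pr a)
    · rintro x ⟨p, q', rfl⟩
      rw [ctx.assoc2, h, bq0]
    · intro x y _ _ hx hy
      rw [ctx.rmodQ.smul_add, hx, hy, add_zero]
    · intro x _ hx
      have := ctx.rmodQ.smul_add q x (-x)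
      rw [add_neg_cancel, qa0, hx, zero_add] at this
      exact this.symm
end
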